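/- Say a sequence of paths (p_k) converges to a path p = (i, s) if for every m there is K such that for all k ≥ K the path p_k has first coordinate i and its Boolean sequence agrees with s on 0, 1, …, m. If p is the limit of a strictly increasing sequence of paths, then X_∞(p) − X^L_∞(p) = Φ_∞(p)/2, where X^L_∞(p) := sup{X_∞(q) : q a path, q < p}. Dually, if q is the limit of a strictly decreasing sequence of paths, then X^R_∞(q) − X_∞(q) = Φ_∞(q)/2, where X^R_∞(q) := inf{X_∞(r) : r a path, r > q}. -/

import Mathlib

noncomputable section
open Filter Topology Classical

/-- Lexicographic strict order on infinite paths. -/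
def PathLt {N : ℕ} (p q : Fin N × (ℕ → Bool)) : Prop :=
  p.1 < q.1 ∨ (p.1 = q.1 ∧ ∃ n : ℕ, (∀ k < n, p.2 k = q.2 k) ∧ p.2 n = false ∧ q.2 n = true)

/-- Lexicographic strict order on positive edges (compared within a sphere `S(n)`). -/
def EdgeLt {N : ℕ} (e f : Fin N × List Bool) : Prop :=
  e.1 < f.1 ∨ (e.1 = f.1 ∧ List.Lex (· < ·) e.2 f.2)

/-- The word `[s 0, …, s (m-1)]` of length `m`. -/
def word (s : ℕ → Bool) (m : ℕ) : List Bool := List.ofFn (fun k : Fin m => s k.val)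

/-- `Y (i, v)` for an edge of `S (m+1)`: `Y_n(e) = Φ(e)/2 + ∑_{f ∈ S(n), f < e} Φ(f)`. -/
def Y {N : ℕ} (Φ : Fin N → List Bool → ℝ) (m : ℕ) (i : Fin N) (v : Fin m → Bool) : ℝ :=
  Φ i (List.ofFn v) / 2 +
    ∑ x : Fin N × (Fin m → Bool),
      if EdgeLt (x.1, List.ofFn x.2) (i, List.ofFn v) then Φ x.1 (List.ofFn x.2) else 0

/-- `X_n(p) = Y_n(p^n)`; here `m = n - 1` is the word length of the `n`-th edge. -/
def X {N : ℕ} (Φ : Fin N → List Bool → ℝ) (m : ℕ) (p : Fin N × (ℕ → Bool)) : ℝ :=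
  Y Φ m p.1 (fun k => p.2 k.val)

/-- `X_∞(p) = lim_n X_n(p)` (the limit exists for every path). -/
def Xinf {N : ℕ} (Φ : Fin N → List Bool → ℝ) (p : Fin N × (ℕ → Bool)) : ℝ :=
  limUnder atTop (fun m => X Φ m p)

/-- `Φ_∞(p) = lim_n Φ(p^n)` (the limit exists since the sequence is positive
and decreasing). -/
def PhiInf {N : ℕ} (Φ : Fin N → List Bool → ℝ) (p : Fin N × (ℕ → Bool)) : ℝ :=
  limUnder atTop (fun m => Φ p.1 (word p.2 m))

/-- `X^L_∞(p) = sup {X_∞(q) : q < p}`. -/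
def XL {N : ℕ} (Φ : Fin N → List Bool → ℝ) (p : Fin N × (ℕ → Bool)) : ℝ :=
  sSup (Xinf Φ '' {q | PathLt q p})

/-- `X^R_∞(p) = inf {X_∞(q) : q > p}`. -/
def XR {N : ℕ} (Φ : Fin N → List Bool → ℝ) (p : Fin N × (ℕ → Bool)) : ℝ :=
  sInf (Xinf Φ '' {q | PathLt p q})

/-- A sequence of paths converges to `p = (i, s)` if for every `m` the paths eventually
have first coordinate `i` and Boolean sequence agreeing with `s` on `0, 1, …, m`. -/
def PathTendsto {N : ℕ} (pk : ℕ → Fin N × (ℕ → Bool)) (p : Fin N × (ℕ → Bool)) : Prop :=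
  ∀ m : ℕ, ∃ K : ℕ, ∀ k ≥ K, (pk k).1 = p.1 ∧ ∀ l ≤ m, (pk k).2 l = p.2 l

/-!
Lay the edges of `S(n)` side by side, in order, as consecutive intervals of lengths
`Φ(e)`: the edge `p^n` occupies `[L_n(p), R_n(p)]` and `X_n(p)` is its midpoint. Harmonicity
puts the interval of `p^(n+1)` inside that of `p^n`, so `L_n(p) ↑ L(p)`, `R_n(p) ↓ R(p)`,
`X_∞(p) = (L(p) + R(p)) / 2` and `Φ_∞(p) = R(p) - L(p)`. If `q < p`, then from some level on
the interval of `q^n` lies to the left of that of `p^n`, so `X_∞(q) ≤ L(p)`; conversely, the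
terms of a sequence increasing to `p` eventually share the edge `p^n`, so their `X_∞` is at
least `L_n(p)`. Hence `X^L_∞(p) = L(p)`, and dually `X^R_∞(q) = R(q)`.
-/

theorem List.append_singleton_lt_append_singleton_iff {α : Type*} [LT α] :
    ∀ {u v : List α}, u.length = v.length → ∀ {a b : α},
      u ++ [a] < v ++ [b] ↔ u < v ∨ u = v ∧ a < b
  | [], [], _, _, _ => by simp [List.cons_lt_cons_iff]
  | c :: u, d :: v, h, _, _ => by
    simp only [List.cons_append, List.cons_lt_cons_iff, List.cons.injEq,
      List.append_singleton_lt_append_singleton_iff (Nat.succ.inj h)]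
    tauto

section Order

variable {N : ℕ}

theorem edgeLt_iff {e f : Fin N × List Bool} : EdgeLt e f ↔ toLex e < toLex f :=
  Prod.Lex.toLex_lt_toLex.symm

theorem edgeLt_append_singleton_iff {i j : Fin N} {u v : List Bool} (h : u.length = v.length)
    {a b : Bool} :
    EdgeLt (j, u ++ [a]) (i, v ++ [b]) ↔ EdgeLt (j, u) (i, v) ∨ j = i ∧ u = v ∧ a < b := by
  simp only [EdgeLt, List.lex_lt, List.append_singleton_lt_append_singleton_iff h]
  tauto

def pathLex (p : Fin N × (ℕ → Bool)) : Fin N ×ₗ Lex (ℕ → Bool) := toLex (p.1, toLex p.2)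

theorem pathLt_iff {p q : Fin N × (ℕ → Bool)} : PathLt p q ↔ pathLex p < pathLex q := by
  simp only [PathLt, pathLex, Prod.Lex.toLex_lt_toLex]
  show _ ↔ _ ∨ _ ∧ Pi.Lex (· < ·) (· < ·) p.2 q.2
  simp only [Pi.Lex, Bool.lt_iff]

theorem word_succ (s : ℕ → Bool) (m : ℕ) : word s (m + 1) = word s m ++ [s m] :=
  List.ofFn_succ_last

theorem word_eq_word_iff {s t : ℕ → Bool} {m : ℕ} :
    word s m = word t m ↔ ∀ k < m, s k = t k := by
  simp only [word, List.ofFn_inj, funext_iff, Fin.forall_iff]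

theorem word_lt_word_iff {s t : ℕ → Bool} {m : ℕ} :
    word s m < word t m ↔ ∃ n < m, (∀ k < n, s k = t k) ∧ s n < t n := by
  induction m with
  | zero => simp [word]
  | succ m ih =>
    rw [word_succ, word_succ, List.append_singleton_lt_append_singleton_iff (by simp [word]), ih,
      word_eq_word_iff]
    constructor
    · rintro (⟨n, hn, h⟩ | h)
      exacts [⟨n, by omega, h⟩, ⟨m, by omega, h⟩]
    · rintro ⟨n, hn, h⟩
      rcases (Nat.lt_succ_iff_lt_or_eq.mp hn) with hn | rfl
      exacts [Or.inl ⟨n, hn, h⟩, Or.inr h]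

theorem pathLt_of_edgeLt_word {p q : Fin N × (ℕ → Bool)} {m : ℕ}
    (h : EdgeLt (q.1, word q.2 m) (p.1, word p.2 m)) : PathLt q p := by
  rcases h with h | ⟨h1, h2⟩
  · exact Or.inl h
  · obtain ⟨n, -, hn⟩ := word_lt_word_iff.mp h2
    exact Or.inr ⟨h1, n, by simpa [Bool.lt_iff, and_assoc] using hn⟩

theorem PathLt.eventually_edgeLt_word {p q : Fin N × (ℕ → Bool)} (h : PathLt q p) :
    ∀ᶠ m in atTop, EdgeLt (q.1, word q.2 m) (p.1, word p.2 m) := by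
  rcases h with h | ⟨h1, n, hn⟩
  · exact Eventually.of_forall fun _ => Or.inl h
  · refine eventually_atTop.2 ⟨n + 1, fun m hm => Or.inr ⟨h1, word_lt_word_iff.mpr ?_⟩⟩
    exact ⟨n, by omega, by simpa [Bool.lt_iff, and_assoc] using hn⟩

variable {pk : ℕ → Fin N × (ℕ → Bool)} {p : Fin N × (ℕ → Bool)}

theorem PathTendsto.eventually_word_eq (h : PathTendsto pk p) (m : ℕ) :
    ∀ᶠ k in atTop, (pk k).1 = p.1 ∧ word (pk k).2 m = word p.2 m := by
  obtain ⟨K, hK⟩ := h m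
  exact eventually_atTop.2 ⟨K, fun k hk =>
    ⟨(hK k hk).1, word_eq_word_iff.2 fun l hl => (hK k hk).2 l hl.le⟩⟩

theorem PathTendsto.pathLt_of_strictMono (htend : PathTendsto pk p)
    (hinc : ∀ k, PathLt (pk k) (pk (k + 1))) (k : ℕ) : PathLt (pk k) p := by
  have hmono : StrictMono (pathLex ∘ pk) :=
    strictMono_nat_of_lt_succ fun k => pathLt_iff.1 (hinc k)
  rw [pathLt_iff]
  by_contra! hle
  have hlt : PathLt p (pk (k + 1)) := pathLt_iff.2 (hle.trans_lt (hmono k.lt_succ_self))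
  obtain ⟨m, hm⟩ := hlt.eventually_edgeLt_word.exists
  obtain ⟨j, ⟨h1, h2⟩, hj⟩ :=
    ((htend.eventually_word_eq m).and (eventually_gt_atTop (k + 1))).exists
  have hback : PathLt (pk j) (pk (k + 1)) := pathLt_of_edgeLt_word (by rwa [h1, h2])
  exact (pathLt_iff.1 hback).not_gt (hmono hj)

theorem PathTendsto.pathLt_of_strictAnti (htend : PathTendsto pk p)
    (hdec : ∀ k, PathLt (pk (k + 1)) (pk k)) (k : ℕ) : PathLt p (pk k) := by
  have hanti : StrictAnti (pathLex ∘ pk) :=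
    strictAnti_nat_of_succ_lt fun k => pathLt_iff.1 (hdec k)
  rw [pathLt_iff]
  by_contra! hle
  have hlt : PathLt (pk (k + 1)) p := pathLt_iff.2 ((hanti k.lt_succ_self).trans_le hle)
  obtain ⟨m, hm⟩ := hlt.eventually_edgeLt_word.exists
  obtain ⟨j, ⟨h1, h2⟩, hj⟩ :=
    ((htend.eventually_word_eq m).and (eventually_gt_atTop (k + 1))).exists
  have hback : PathLt (pk (k + 1)) (pk j) := pathLt_of_edgeLt_word (by rwa [h1, h2])
  exact (pathLt_iff.1 hback).not_gt (hanti hj)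

end Order

theorem Fintype.sum_prod_fin_succ {ι α M : Type*} [Fintype ι] [Fintype α] [AddCommMonoid M]
    {m : ℕ} (F : ι × (Fin (m + 1) → α) → M) :
    ∑ x, F x = ∑ y : ι × (Fin m → α), ∑ a, F (y.1, Fin.snoc y.2 a) := by
  simp only [Fintype.sum_prod_type]
  refine Finset.sum_congr rfl fun i _ => ?_
  rw [← (Fin.snocEquiv fun _ => α).sum_comp, Fintype.sum_prod_type, Finset.sum_comm]
  rfl

section Mass

variable {N : ℕ} {Φ : Fin N → List Bool → ℝ}

def IsHarmonic (Φ : Fin N → List Bool → ℝ) : Prop :=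
  ∀ i w, Φ i w = Φ i (w ++ [false]) + Φ i (w ++ [true])

/-- The `Φ`-mass of the edges of `S(m+1)` strictly before `e`. -/
def massBefore (Φ : Fin N → List Bool → ℝ) (m : ℕ) (e : Fin N × List Bool) : ℝ :=
  ∑ x : Fin N × (Fin m → Bool),
    if EdgeLt (x.1, List.ofFn x.2) e then Φ x.1 (List.ofFn x.2) else 0

theorem sum_ite_edgeLt_append_singleton (hΦ : IsHarmonic Φ) {m : ℕ} (i j : Fin N)
    (v w : Fin m → Bool) (b : Bool) :
    ∑ a, (if EdgeLt (j, List.ofFn w ++ [a]) (i, List.ofFn v ++ [b])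
      then Φ j (List.ofFn w ++ [a]) else 0) =
    (if EdgeLt (j, List.ofFn w) (i, List.ofFn v) then Φ j (List.ofFn w) else 0) +
      if (j, w) = (i, v) ∧ b then Φ i (List.ofFn v ++ [false]) else 0 := by
  simp only [edgeLt_append_singleton_iff (by simp : (List.ofFn w).length = (List.ofFn v).length),
    List.ofFn_inj, Prod.mk.injEq, Fintype.sum_bool]
  by_cases heq : j = i ∧ w = v
  · obtain ⟨rfl, rfl⟩ := heq
    cases b <;> simp [edgeLt_iff, Bool.lt_iff]
  · simp only [← and_assoc, heq, false_and, or_false, if_false, add_zero]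
    split_ifs
    · rw [add_comm, ← hΦ]
    · rw [add_zero]

theorem massBefore_append_singleton (hΦ : IsHarmonic Φ) {m : ℕ} (i : Fin N) (v : Fin m → Bool)
    (b : Bool) :
    massBefore Φ (m + 1) (i, List.ofFn v ++ [b]) =
      massBefore Φ m (i, List.ofFn v) + if b then Φ i (List.ofFn v ++ [false]) else 0 := by
  simp only [massBefore, Fintype.sum_prod_fin_succ, List.ofFn_succ_last, Fin.snoc_castSucc,
    Fin.snoc_last, sum_ite_edgeLt_append_singleton hΦ, Finset.sum_add_distrib]
  congr 1
  cases b <;> simp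

theorem massBefore_add_le_massBefore (hnn : ∀ i w, 0 ≤ Φ i w) {m : ℕ} {i j : Fin N}
    {v w : Fin m → Bool} (h : EdgeLt (j, List.ofFn w) (i, List.ofFn v)) :
    massBefore Φ m (j, List.ofFn w) + Φ j (List.ofFn w) ≤ massBefore Φ m (i, List.ofFn v) := by
  let before (e : Fin N × List Bool) :=
    Finset.univ.filter fun x : Fin N × (Fin m → Bool) => EdgeLt (x.1, List.ofFn x.2) e
  have hsub : insert (j, w) (before (j, List.ofFn w)) ⊆ before (i, List.ofFn v) := by
    refine Finset.insert_subset (by simpa [before] using h) fun x hx => ?_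
    simp only [before, Finset.mem_filter, Finset.mem_univ, true_and, edgeLt_iff] at hx h ⊢
    exact hx.trans h
  have hw : (j, w) ∉ before (j, List.ofFn w) := by simp [before, edgeLt_iff]
  calc massBefore Φ m (j, List.ofFn w) + Φ j (List.ofFn w)
      = ∑ x ∈ insert (j, w) (before (j, List.ofFn w)), Φ x.1 (List.ofFn x.2) := by
        rw [Finset.sum_insert hw, add_comm, Finset.sum_filter]; rfl
    _ ≤ ∑ x ∈ before (i, List.ofFn v), Φ x.1 (List.ofFn x.2) :=
        Finset.sum_le_sum_of_subset_of_nonneg hsub fun x _ _ => hnn x.1 _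
    _ = massBefore Φ m (i, List.ofFn v) := Finset.sum_filter _ _

end Mass

section Path

variable {N : ℕ} {Φ : Fin N → List Bool → ℝ} (p : Fin N × (ℕ → Bool))

/-- `[leftEnd Φ p m, rightEnd Φ p m]` is the interval `[L_n(p), R_n(p)]` of the edge `p^n`,
`n = m + 1`. -/
def leftEnd (Φ : Fin N → List Bool → ℝ) (p : Fin N × (ℕ → Bool)) (m : ℕ) : ℝ :=
  massBefore Φ m (p.1, word p.2 m)

def rightEnd (Φ : Fin N → List Bool → ℝ) (p : Fin N × (ℕ → Bool)) (m : ℕ) : ℝ :=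
  leftEnd Φ p m + Φ p.1 (word p.2 m)

theorem X_eq_midpoint (m : ℕ) : X Φ m p = (leftEnd Φ p m + rightEnd Φ p m) / 2 := by
  have hX : X Φ m p = Φ p.1 (word p.2 m) / 2 + leftEnd Φ p m := rfl
  rw [hX, rightEnd]
  ring

theorem leftEnd_succ (hΦ : IsHarmonic Φ) (m : ℕ) :
    leftEnd Φ p (m + 1) =
      leftEnd Φ p m + if p.2 m then Φ p.1 (word p.2 m ++ [false]) else 0 := by
  rw [leftEnd, word_succ]
  exact massBefore_append_singleton hΦ p.1 _ _

theorem monotone_leftEnd (hnn : ∀ i w, 0 ≤ Φ i w) (hΦ : IsHarmonic Φ) :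
    Monotone (leftEnd Φ p) :=
  monotone_nat_of_le_succ fun m => by
    rw [leftEnd_succ p hΦ]
    split_ifs <;> linarith [hnn p.1 (word p.2 m ++ [false])]

theorem antitone_rightEnd (hnn : ∀ i w, 0 ≤ Φ i w) (hΦ : IsHarmonic Φ) :
    Antitone (rightEnd Φ p) :=
  antitone_nat_of_succ_le fun m => by
    rw [rightEnd, rightEnd, leftEnd_succ p hΦ, word_succ, hΦ p.1 (word p.2 m)]
    cases p.2 m <;> simp [hnn p.1 (word p.2 m ++ [true]), add_assoc]

theorem leftEnd_le_rightEnd (hnn : ∀ i w, 0 ≤ Φ i w) (hΦ : IsHarmonic Φ) (m n : ℕ) :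
    leftEnd Φ p m ≤ rightEnd Φ p n := by
  have hself (k : ℕ) : leftEnd Φ p k ≤ rightEnd Φ p k :=
    le_add_of_nonneg_right (hnn p.1 (word p.2 k))
  rcases le_total m n with h | h
  · exact (monotone_leftEnd p hnn hΦ h).trans (hself n)
  · exact (hself m).trans (antitone_rightEnd p hnn hΦ h)

theorem rightEnd_le_leftEnd_of_edgeLt (hnn : ∀ i w, 0 ≤ Φ i w) {q : Fin N × (ℕ → Bool)}
    {m : ℕ} (h : EdgeLt (q.1, word q.2 m) (p.1, word p.2 m)) :
    rightEnd Φ q m ≤ leftEnd Φ p m :=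
  massBefore_add_le_massBefore hnn h

def leftLim (Φ : Fin N → List Bool → ℝ) (p : Fin N × (ℕ → Bool)) : ℝ :=
  ⨆ m, leftEnd Φ p m

def rightLim (Φ : Fin N → List Bool → ℝ) (p : Fin N × (ℕ → Bool)) : ℝ :=
  ⨅ m, rightEnd Φ p m

end Path

section Limits

variable {N : ℕ} {Φ : Fin N → List Bool → ℝ} (hnn : ∀ i w, 0 ≤ Φ i w)
  (hΦ : IsHarmonic Φ) (p : Fin N × (ℕ → Bool))
include hnn hΦ

theorem bddAbove_range_leftEnd : BddAbove (Set.range (leftEnd Φ p)) :=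
  ⟨rightEnd Φ p 0, Set.forall_mem_range.2 fun m => leftEnd_le_rightEnd p hnn hΦ m 0⟩

theorem bddBelow_range_rightEnd : BddBelow (Set.range (rightEnd Φ p)) :=
  ⟨leftEnd Φ p 0, Set.forall_mem_range.2 fun m => leftEnd_le_rightEnd p hnn hΦ 0 m⟩

theorem leftEnd_le_leftLim (m : ℕ) : leftEnd Φ p m ≤ leftLim Φ p :=
  le_ciSup (bddAbove_range_leftEnd hnn hΦ p) m

theorem rightLim_le_rightEnd (m : ℕ) : rightLim Φ p ≤ rightEnd Φ p m :=
  ciInf_le (bddBelow_range_rightEnd hnn hΦ p) m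

theorem leftLim_le_rightLim : leftLim Φ p ≤ rightLim Φ p :=
  ciSup_le fun m => le_ciInf fun n => leftEnd_le_rightEnd p hnn hΦ m n

theorem tendsto_leftEnd : Tendsto (leftEnd Φ p) atTop (𝓝 (leftLim Φ p)) :=
  tendsto_atTop_ciSup (monotone_leftEnd p hnn hΦ) (bddAbove_range_leftEnd hnn hΦ p)

theorem tendsto_rightEnd : Tendsto (rightEnd Φ p) atTop (𝓝 (rightLim Φ p)) :=
  tendsto_atTop_ciInf (antitone_rightEnd p hnn hΦ) (bddBelow_range_rightEnd hnn hΦ p)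

theorem Xinf_eq : Xinf Φ p = (leftLim Φ p + rightLim Φ p) / 2 := by
  refine Tendsto.limUnder_eq ?_
  simpa only [X_eq_midpoint] using
    ((tendsto_leftEnd hnn hΦ p).add (tendsto_rightEnd hnn hΦ p)).div_const 2

theorem PhiInf_eq : PhiInf Φ p = rightLim Φ p - leftLim Φ p := by
  refine Tendsto.limUnder_eq ?_
  refine ((tendsto_rightEnd hnn hΦ p).sub (tendsto_leftEnd hnn hΦ p)).congr fun m => ?_
  rw [rightEnd, add_sub_cancel_left]

theorem leftEnd_le_Xinf (m : ℕ) : leftEnd Φ p m ≤ Xinf Φ p := by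
  rw [Xinf_eq hnn hΦ p]
  linarith [leftEnd_le_leftLim hnn hΦ p m, leftLim_le_rightLim hnn hΦ p]

theorem Xinf_le_rightEnd (m : ℕ) : Xinf Φ p ≤ rightEnd Φ p m := by
  rw [Xinf_eq hnn hΦ p]
  linarith [rightLim_le_rightEnd hnn hΦ p m, leftLim_le_rightLim hnn hΦ p]

end Limits

section Comparison

variable {N : ℕ} {Φ : Fin N → List Bool → ℝ} (hnn : ∀ i w, 0 ≤ Φ i w)
  (hΦ : IsHarmonic Φ)
include hnn hΦ

theorem Xinf_le_leftLim_of_pathLt {p q : Fin N × (ℕ → Bool)} (h : PathLt q p) :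
    Xinf Φ q ≤ leftLim Φ p := by
  obtain ⟨m, hm⟩ := h.eventually_edgeLt_word.exists
  calc Xinf Φ q ≤ rightEnd Φ q m := Xinf_le_rightEnd hnn hΦ q m
    _ ≤ leftEnd Φ p m := rightEnd_le_leftEnd_of_edgeLt p hnn hm
    _ ≤ leftLim Φ p := leftEnd_le_leftLim hnn hΦ p m

theorem rightLim_le_Xinf_of_pathLt {p q : Fin N × (ℕ → Bool)} (h : PathLt q p) :
    rightLim Φ q ≤ Xinf Φ p := by
  obtain ⟨m, hm⟩ := h.eventually_edgeLt_word.exists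
  calc rightLim Φ q ≤ rightEnd Φ q m := rightLim_le_rightEnd hnn hΦ q m
    _ ≤ leftEnd Φ p m := rightEnd_le_leftEnd_of_edgeLt p hnn hm
    _ ≤ Xinf Φ p := leftEnd_le_Xinf hnn hΦ p m

variable {pk : ℕ → Fin N × (ℕ → Bool)} {p : Fin N × (ℕ → Bool)}

theorem XL_eq_leftLim (htend : PathTendsto pk p) (hinc : ∀ k, PathLt (pk k) (pk (k + 1))) :
    XL Φ p = leftLim Φ p := by
  have hle : ∀ x ∈ Xinf Φ '' {q | PathLt q p}, x ≤ leftLim Φ p := by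
    rintro _ ⟨q, hq, rfl⟩
    exact Xinf_le_leftLim_of_pathLt hnn hΦ hq
  refine le_antisymm (csSup_le ⟨_, pk 0, htend.pathLt_of_strictMono hinc 0, rfl⟩ hle)
    (ciSup_le fun m => ?_)
  obtain ⟨k, h1, h2⟩ := (htend.eventually_word_eq m).exists
  calc leftEnd Φ p m = leftEnd Φ (pk k) m := by rw [leftEnd, leftEnd, h1, h2]
    _ ≤ Xinf Φ (pk k) := leftEnd_le_Xinf hnn hΦ _ m
    _ ≤ XL Φ p := le_csSup ⟨_, hle⟩ ⟨pk k, htend.pathLt_of_strictMono hinc k, rfl⟩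

theorem XR_eq_rightLim (htend : PathTendsto pk p) (hdec : ∀ k, PathLt (pk (k + 1)) (pk k)) :
    XR Φ p = rightLim Φ p := by
  have hge : ∀ x ∈ Xinf Φ '' {r | PathLt p r}, rightLim Φ p ≤ x := by
    rintro _ ⟨r, hr, rfl⟩
    exact rightLim_le_Xinf_of_pathLt hnn hΦ hr
  refine le_antisymm (le_ciInf fun m => ?_)
    (le_csInf ⟨_, pk 0, htend.pathLt_of_strictAnti hdec 0, rfl⟩ hge)
  obtain ⟨k, h1, h2⟩ := (htend.eventually_word_eq m).exists
  calc XR Φ p ≤ Xinf Φ (pk k) :=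
        csInf_le ⟨_, hge⟩ ⟨pk k, htend.pathLt_of_strictAnti hdec k, rfl⟩
    _ ≤ rightEnd Φ (pk k) m := Xinf_le_rightEnd hnn hΦ _ m
    _ = rightEnd Φ p m := by rw [rightEnd, rightEnd, leftEnd, leftEnd, h1, h2]

end Comparison

theorem Xinfty_one_sided_jumps_general (N : ℕ) (Φ : Fin N → List Bool → ℝ)
    (hpos : ∀ (i : Fin N) (w : List Bool), 0 < Φ i w)
    (hharm : ∀ (i : Fin N) (w : List Bool), Φ i w = Φ i (w ++ [false]) + Φ i (w ++ [true])) :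
    (∀ (p : Fin N × (ℕ → Bool)) (pk : ℕ → Fin N × (ℕ → Bool)),
      (∀ k, PathLt (pk k) (pk (k + 1))) → PathTendsto pk p →
      Xinf Φ p - XL Φ p = PhiInf Φ p / 2) ∧
    (∀ (q : Fin N × (ℕ → Bool)) (qk : ℕ → Fin N × (ℕ → Bool)),
      (∀ k, PathLt (qk (k + 1)) (qk k)) → PathTendsto qk q →
      XR Φ q - Xinf Φ q = PhiInf Φ q / 2) := by
  have hnn : ∀ i w, 0 ≤ Φ i w := fun i w => (hpos i w).le
  refine ⟨fun p pk hinc htend => ?_, fun q qk hdec htend => ?_⟩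
  · rw [XL_eq_leftLim hnn hharm htend hinc, Xinf_eq hnn hharm, PhiInf_eq hnn hharm]
    ring
  · rw [XR_eq_rightLim hnn hharm htend hdec, Xinf_eq hnn hharm, PhiInf_eq hnn hharm]
    ring

/-- **One-sided jumps of `X_∞`.** If `p` is the limit of a strictly increasing sequence
of paths, then `X_∞(p) − X^L_∞(p) = Φ_∞(p)/2`; dually, if `q` is the limit of a strictly
decreasing sequence of paths, then `X^R_∞(q) − X_∞(q) = Φ_∞(q)/2`. -/
theorem Xinfty_one_sided_jumps (N : ℕ) (hN : 1 ≤ N) (Φ : Fin N → List Bool → ℝ)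
    (hpos : ∀ (i : Fin N) (w : List Bool), 0 < Φ i w)
    (hharm : ∀ (i : Fin N) (w : List Bool), Φ i w = Φ i (w ++ [false]) + Φ i (w ++ [true])) :
    (∀ (p : Fin N × (ℕ → Bool)) (pk : ℕ → Fin N × (ℕ → Bool)),
      (∀ k, PathLt (pk k) (pk (k + 1))) → PathTendsto pk p →
      Xinf Φ p - XL Φ p = PhiInf Φ p / 2) ∧
    (∀ (q : Fin N × (ℕ → Bool)) (qk : ℕ → Fin N × (ℕ → Bool)),
      (∀ k, PathLt (qk (k + 1)) (qk k)) → PathTendsto qk q →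
      XR Φ q - Xinf Φ q = PhiInf Φ q / 2) :=
  Xinfty_one_sided_jumps_general N Φ hpos hharm
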